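/- arXiv:1512.07308 — 2 statements merged into one kernel-verified Lean document; each statement's English description precedes it below -/
import Mathlib

section
/- (Proposition 1, σ = 0 part) Suppose K_∞ = L_∞ = ∞. Then ξ_i^{(l)} = 0 for every i ≥ 1 and l ≥ 0; equivalently, σ := lim_{i→∞} ξ_i = 0. -/
/-! Fix `l` and `x > 0`. Multiplying the three-term recurrence by `π` puts it in the discrete
Sturm–Liouville form `p (n+1) (q (n+2) - q (n+1)) = p n (q (n+1) - q n) - x r (n+1) q (n+1)`
with `p = λ π` and `r = π`. As `∑ 1 / p = L_∞` and `∑ r = K_∞` diverge, a solution cannot keep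
one sign from some index on, so `Q_n^{(l)}(x)` takes both signs for infinitely many `n`. On the
other hand the sign of `Q_n^{(l)}(x)` is `(-1) ^ N_n`, where `N_n` counts the zeros of `Q_n^{(l)}`
below `x`, and by interlacing `N_n` is nondecreasing in `n`; hence it is unbounded. So
`x^{(l)}_{n,i} < x` for some `n`, and `ξ_i^{(l)} < x` because the `i`-th zero decreases in `n`. -/

open Filter Topology ENNReal MeasureTheory

open Finset Polynomial

theorem tendsto_atBot_of_le_sub_mul {a b : ℕ → ℝ} {c : ℝ} (hc : 0 < c) (hb₀ : ∀ n, 0 ≤ b n)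
    (hb : ¬ Summable b) {m : ℕ} (h : ∀ n ≥ m, a (n + 1) ≤ a n - c * b n) :
    Tendsto a atTop atBot := by
  set S : ℕ → ℝ := fun n => ∑ k ∈ range n, b k
  have hS : Tendsto S atTop atTop := (not_summable_iff_tendsto_nat_atTop_of_nonneg hb₀).1 hb
  have hle : ∀ n ≥ m, a n ≤ a m + c * S m - c * S n := by
    intro n hn
    induction n, hn using Nat.le_induction with
    | base => simp
    | succ n hmn ih =>
      have : S (n + 1) = S n + b n := sum_range_succ b n
      rw [this]
      linarith [h n hmn]
  refine tendsto_atBot_mono' atTop (eventually_ge_atTop m |>.mono hle) ?_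
  exact tendsto_atBot_add_const_left _ _ (tendsto_neg_atTop_atBot.comp (hS.const_mul_atTop hc))

section SturmLiouville

variable {p r q : ℕ → ℝ} {x : ℝ}

theorem exists_ge_lt_zero_of_sturmLiouville (hx : 0 < x) (hp : ∀ k, 0 < p k) (hr : ∀ k, 0 < r k)
    (hrec : ∀ n, p (n + 1) * (q (n + 2) - q (n + 1))
      = p n * (q (n + 1) - q n) - x * r (n + 1) * q (n + 1))
    (hq₀ : q 0 ≠ 0) (hp_inv : ¬ Summable fun k => (p k)⁻¹) (hr_sum : ¬ Summable r) (m : ℕ) :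
    ∃ n ≥ m, q n < 0 := by
  by_contra! hq
  set D : ℕ → ℝ := fun k => p k * (q (k + 1) - q k)
  have hD_succ : ∀ k, D (k + 1) = D k - x * r (k + 1) * q (k + 1) := hrec
  have hq_succ : ∀ k, q (k + 1) = q k + D k * (p k)⁻¹ := fun k => by
    simp only [D]; field_simp [(hp k).ne']; ring
  have hD_anti : ∀ k ≥ m, ∀ n ≥ k, D n ≤ D k := by
    intro k hk n hn
    induction n, hn using Nat.le_induction with
    | base => rfl
    | succ n hkn ih =>
      have := mul_nonneg (mul_nonneg hx.le (hr (n + 1)).le) (hq (n + 1) (by omega))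
      linarith [hD_succ n]
  by_cases hD_neg : ∃ k ≥ m, D k < 0
  · obtain ⟨k, hkm, hDk⟩ := hD_neg
    -- the slope stays below `D k < 0`, so `q` drifts to `-∞` along the divergent `∑ 1 / p`
    have : Tendsto q atTop atBot := by
      refine tendsto_atBot_of_le_sub_mul (neg_pos.2 hDk) (fun n => (inv_pos.2 (hp n)).le) hp_inv
        (m := k) fun n hn => ?_
      rw [hq_succ]
      nlinarith [hD_anti k hkm n hn, inv_pos.2 (hp n)]
    obtain ⟨n, hn, hqn⟩ := ((this.eventually_lt_atBot 0).and (eventually_ge_atTop m)).exists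
    exact absurd (hq n hqn) (not_le.2 hn)
  push Not at hD_neg
  have hq_mono : ∀ j ≥ m, ∀ n ≥ j, q j ≤ q n := by
    intro j hj n hn
    induction n, hn using Nat.le_induction with
    | base => rfl
    | succ n hjn ih =>
      have := mul_nonneg (hD_neg n (by omega)) (inv_pos.2 (hp n)).le
      linarith [hq_succ n]
  by_cases hq_pos : ∃ j ≥ m, 0 < q j
  · obtain ⟨j, hjm, hqj⟩ := hq_pos
    -- `q ≥ q j > 0` from `j` on, so the slope drifts to `-∞` along the divergent `∑ r`
    have : Tendsto D atTop atBot := by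
      refine tendsto_atBot_of_le_sub_mul (mul_pos hx hqj) (fun n => (hr (n + 1)).le)
        ((summable_nat_add_iff 1).not.2 hr_sum) (m := j) fun n hn => ?_
      have := mul_nonneg (mul_nonneg hx.le (hr (n + 1)).le)
        (sub_nonneg.2 (hq_mono j hjm (n + 1) (by omega)))
      linarith [hD_succ n]
    obtain ⟨n, hn, hnm⟩ := ((this.eventually_lt_atBot 0).and (eventually_ge_atTop m)).exists
    exact absurd (hD_neg n hnm) (not_le.2 hn)
  push Not at hq_pos
  have hq_zero : ∀ n ≥ m, q n = 0 := fun n hn => le_antisymm (hq_pos n hn) (hq n hn)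
  have hq_back : ∀ t ≤ m, q t = 0 ∧ q (t + 1) = 0 := by
    intro t ht
    induction ht using Nat.decreasingInduction with
    | self => exact ⟨hq_zero m le_rfl, hq_zero (m + 1) (by omega)⟩
    | of_succ t _ ih =>
      refine ⟨?_, ih.1⟩
      have := hrec t
      rw [ih.1, ih.2] at this
      simpa [(hp t).ne'] using this
  exact hq₀ (hq_back 0 (Nat.zero_le m)).1

end SturmLiouville

theorem Finset.neg_one_pow_card_filter_neg_mul_prod_pos {ι : Type*} (s : Finset ι) (f : ι → ℝ)
    (hf : ∀ i ∈ s, f i ≠ 0) : 0 < (-1) ^ #{i ∈ s | f i < 0} * ∏ i ∈ s, f i := by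
  rw [← prod_filter_mul_prod_filter_not s (fun i => f i < 0), ← mul_assoc, ← prod_neg]
  refine mul_pos (prod_pos fun i hi => ?_) (prod_pos fun i hi => ?_)
  · exact neg_pos.2 (mem_filter.1 hi).2
  · obtain ⟨his, hi⟩ := mem_filter.1 hi
    exact lt_of_le_of_ne (not_lt.1 hi) (hf i his).symm

theorem Polynomial.eval_eq_leadingCoeff_mul_prod_sub {R ι : Type*} [CommRing R] [IsDomain R]
    {p : R[X]} (hp : p ≠ 0) {t : Finset ι} {z : ι → R} (hz : Set.InjOn z t)
    (hroot : ∀ j ∈ t, p.IsRoot (z j)) (hcard : #t = p.natDegree) (x : R) :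
    p.eval x = p.leadingCoeff * ∏ j ∈ t, (x - z j) := by
  classical
  have hle : (t.image z).val ≤ p.roots := by
    refine (Multiset.le_iff_subset (t.image z).nodup).2 fun a ha => ?_
    obtain ⟨j, hj, rfl⟩ := mem_image.1 ha
    exact (mem_roots hp).2 (hroot j hj)
  have himage : #(t.image z) = p.natDegree := by rw [card_image_of_injOn hz, hcard]
  have hroots : p.roots = (t.image z).val :=
    (Multiset.eq_of_le_of_card_le hle ((card_roots' p).trans himage.ge)).symm
  have hsplits : p.Splits := splits_iff_card_roots.2 (by rw [hroots]; exact himage)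
  rw [hsplits.eval_eq_prod_roots, hroots, ← prod_image (f := (x - ·)) hz]
  rfl

theorem Polynomial.neg_one_pow_card_filter_lt_mul_eval_pos {ι : Type*} {p : ℝ[X]}
    {t : Finset ι} {z : ι → ℝ} (hz : Set.InjOn z t) (hroot : ∀ j ∈ t, p.IsRoot (z j))
    (hcard : #t = p.natDegree) (hlc : 0 < (-1) ^ p.natDegree * p.leadingCoeff) {x : ℝ}
    (hx : p.eval x ≠ 0) : 0 < (-1) ^ #{j ∈ t | z j < x} * p.eval x := by
  have hp : p ≠ 0 := by rintro rfl; simp at hlc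
  have hprod : ∏ j ∈ t, (x - z j) = (-1) ^ #t * ∏ j ∈ t, (z j - x) := by
    rw [← prod_neg]; simp
  rw [eval_eq_leadingCoeff_mul_prod_sub hp hz hroot hcard, hprod] at hx ⊢
  have hzx : ∀ j ∈ t, z j - x ≠ 0 :=
    prod_ne_zero_iff.1 (right_ne_zero_of_mul (right_ne_zero_of_mul hx))
  have key := neg_one_pow_card_filter_neg_mul_prod_pos t _ hzx
  simp only [sub_neg] at key
  calc (0 : ℝ) < ((-1) ^ p.natDegree * p.leadingCoeff)
        * ((-1) ^ #{j ∈ t | z j < x} * ∏ j ∈ t, (z j - x)) := mul_pos hlc key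
    _ = _ := by rw [hcard]; ring

noncomputable def bdPoly (A B : ℕ → ℝ) : ℕ → ℝ[X]
  | 0 => 1
  | 1 => C (A 0)⁻¹ * (C (A 0 + B 0) - X)
  | n + 2 => C (A (n + 1))⁻¹ *
      ((C (A (n + 1) + B (n + 1)) - X) * bdPoly A B (n + 1) - C (B (n + 1)) * bdPoly A B n)

section bdPoly

variable {A B : ℕ → ℝ}

theorem eval_bdPoly (hA : ∀ k, A k ≠ 0) {f : ℕ → ℝ → ℝ} (h₀ : ∀ x, f 0 x = 1)
    (h₁ : ∀ x, A 0 * f 1 x = A 0 + B 0 - x)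
    (hrec : ∀ n x, A (n + 1) * f (n + 2) x
      = (A (n + 1) + B (n + 1) - x) * f (n + 1) x - B (n + 1) * f n x) (n : ℕ) (x : ℝ) :
    (bdPoly A B n).eval x = f n x := by
  induction n using Nat.twoStepInduction with
  | zero => simp [bdPoly, h₀]
  | one => simp [bdPoly, ← h₁, hA 0]
  | more n ih₀ ih₁ =>
    simp only [bdPoly, eval_mul, eval_sub, eval_C, eval_X, ih₀, ih₁, ← hrec, hA (n + 1), ne_eq,
      not_false_eq_true, inv_mul_cancel_left₀]

theorem natDegree_bdPoly_le (n : ℕ) : (bdPoly A B n).natDegree ≤ n := by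
  induction n using Nat.twoStepInduction with
  | zero => simp [bdPoly]
  | one =>
    simp only [bdPoly]
    exact natDegree_C_mul_le _ _ |>.trans (by compute_degree)
  | more n ih₀ ih₁ =>
    simp only [bdPoly]
    refine natDegree_C_mul_le _ _ |>.trans ((natDegree_sub_le _ _).trans (max_le ?_ ?_))
    · exact natDegree_mul_le.trans (add_le_add (by compute_degree) ih₁) |>.trans (by omega)
    · exact natDegree_C_mul_le _ _ |>.trans (ih₀.trans (by omega))

theorem coeff_bdPoly_self (n : ℕ) :
    (bdPoly A B n).coeff n = (-1) ^ n * ∏ k ∈ range n, (A k)⁻¹ := by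
  induction n using Nat.twoStepInduction with
  | zero => simp [bdPoly]
  | one => simp [bdPoly]
  | more n ih₀ ih₁ =>
    have h₁ : (bdPoly A B (n + 1)).coeff (n + 2) = 0 :=
      coeff_eq_zero_of_natDegree_lt ((natDegree_bdPoly_le _).trans_lt (by omega))
    have h₀ : (bdPoly A B n).coeff (n + 2) = 0 :=
      coeff_eq_zero_of_natDegree_lt ((natDegree_bdPoly_le _).trans_lt (by omega))
    simp only [bdPoly, coeff_C_mul, sub_mul, coeff_sub, coeff_X_mul, h₀, h₁, ih₁, prod_range_succ]
    ring

theorem natDegree_bdPoly (hA : ∀ k, A k ≠ 0) (n : ℕ) : (bdPoly A B n).natDegree = n := by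
  refine (natDegree_bdPoly_le n).antisymm (le_natDegree_of_ne_zero ?_)
  rw [coeff_bdPoly_self]
  exact mul_ne_zero (pow_ne_zero _ (by norm_num))
    (prod_ne_zero_iff.2 fun k _ => inv_ne_zero (hA k))

theorem neg_one_pow_mul_leadingCoeff_bdPoly_pos (hA : ∀ k, 0 < A k) (n : ℕ) :
    0 < (-1) ^ n * (bdPoly A B n).leadingCoeff := by
  rw [leadingCoeff, natDegree_bdPoly (fun k => (hA k).ne'), coeff_bdPoly_self, ← mul_assoc,
    ← pow_add, Even.neg_one_pow ⟨n, rfl⟩, one_mul]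
  exact prod_pos fun k _ => inv_pos.2 (hA k)

end bdPoly

theorem exists_forall_ge_eq_of_monotone_of_le {f : ℕ → ℕ} (hf : Monotone f) {B : ℕ}
    (hB : ∀ n, f n ≤ B) : ∃ n₀, ∀ n ≥ n₀, f n = f n₀ := by
  have hbdd : BddAbove (Set.range f) := ⟨B, Set.forall_mem_range.2 hB⟩
  obtain ⟨n₀, hn₀⟩ := Nat.sSup_mem (Set.range_nonempty f) hbdd
  exact ⟨n₀, fun n hn => (hn₀ ▸ le_csSup hbdd (Set.mem_range_self n)).antisymm (hf hn)⟩

theorem strictMonoOn_Icc_of_lt_succ {z : ℕ → ℝ} {n : ℕ}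
    (hz : ∀ j, 1 ≤ j → j + 1 ≤ n → z j < z (j + 1)) : StrictMonoOn z (Set.Icc 1 n) := by
  rintro i ⟨hi, -⟩ j ⟨-, hjn⟩ hij
  induction j, hij using Nat.le_induction with
  | base => exact hz i hi hjn
  | succ j hij ih => exact (ih (by omega)).trans (hz j (by omega) hjn)

noncomputable def countBelow (z : ℕ → ℝ) (n : ℕ) (x : ℝ) : ℕ := #{j ∈ Icc 1 n | z j < x}

theorem countBelow_le (z : ℕ → ℝ) (n : ℕ) (x : ℝ) : countBelow z n x ≤ n :=
  (card_filter_le _ _).trans (by simp)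

theorem countBelow_lt {z : ℕ → ℝ} {n i : ℕ} {x : ℝ} (hi : 1 ≤ i) (hx : ∀ j ∈ Icc i n, x ≤ z j) :
    countBelow z n x < i := by
  have hsub : {j ∈ Icc 1 n | z j < x} ⊆ Ico 1 i := fun j hj => by
    simp only [mem_filter, mem_Icc, mem_Ico] at hj ⊢
    exact ⟨hj.1.1, not_le.1 fun hij => (hx j (mem_Icc.2 ⟨hij, hj.1.2⟩)).not_gt hj.2⟩
  have := card_le_card hsub
  simp only [Nat.card_Ico] at this
  unfold countBelow
  omega

theorem monotone_countBelow {z : ℕ → ℕ → ℝ} (hsep : ∀ n j, 1 ≤ j → j ≤ n → z (n + 1) j < z n j)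
    (x : ℝ) : Monotone fun n => countBelow (z n) n x :=
  monotone_nat_of_le_succ fun n => card_le_card fun j hj => by
    simp only [mem_filter, mem_Icc] at hj ⊢
    exact ⟨⟨hj.1.1, by omega⟩, (hsep n j hj.1.1 hj.1.2).trans hj.2⟩

theorem exists_lt_of_sign_oscillation {z : ℕ → ℕ → ℝ} {q : ℕ → ℝ} {x : ℝ}
    (hzlt : ∀ n j, 1 ≤ j → j + 1 ≤ n → z n j < z n (j + 1))
    (hsep : ∀ n j, 1 ≤ j → j ≤ n → z (n + 1) j < z n j)
    (hsign : ∀ n, q n ≠ 0 → 0 < (-1) ^ countBelow (z n) n x * q n)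
    (hosc : ∀ c : ℝ, c ≠ 0 → ∀ m, ∃ n ≥ m, c * q n < 0) {i : ℕ} (hi : 1 ≤ i) :
    ∃ n ≥ i, z n i < x := by
  by_contra! h
  have hbdd : ∀ n, countBelow (z n) n x ≤ i := fun n => by
    rcases lt_or_ge n i with hn | hn
    · exact (countBelow_le _ n x).trans hn.le
    · exact (countBelow_lt hi fun j hj => (h n hn).trans
        ((strictMonoOn_Icc_of_lt_succ (hzlt n)).monotoneOn ⟨le_rfl.trans hi, hn⟩
          ⟨hi.trans (mem_Icc.1 hj).1, (mem_Icc.1 hj).2⟩ (mem_Icc.1 hj).1)).le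
  obtain ⟨n₀, hn₀⟩ := exists_forall_ge_eq_of_monotone_of_le (monotone_countBelow hsep x) hbdd
  obtain ⟨n, hn, hneg⟩ := hosc ((-1) ^ countBelow (z n₀) n₀ x) (by simp) n₀
  have hpos := hsign n (right_ne_zero_of_mul hneg.ne)
  rw [hn₀ n hn] at hpos
  linarith

theorem eq_zero_of_tendsto_of_forall_exists_lt {z : ℕ → ℝ} {ξ : ℝ} {i : ℕ}
    (hpos : ∀ n ≥ i, 0 < z n) (hanti : ∀ n ≥ i, z (n + 1) < z n)
    (hlim : Tendsto z atTop (𝓝 ξ)) (hbelow : ∀ x, 0 < x → ∃ n ≥ i, z n < x) : ξ = 0 := by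
  refine le_antisymm (le_of_forall_gt_imp_ge_of_dense fun x hx => ?_)
    (ge_of_tendsto hlim ((eventually_ge_atTop i).mono fun n hn => (hpos n hn).le))
  obtain ⟨n, hn, hlt⟩ := hbelow x hx
  refine (le_of_tendsto hlim ((eventually_ge_atTop n).mono fun k hk => ?_)).trans hlt.le
  exact Nat.rel_of_forall_rel_succ_of_le_of_le (· ≥ ·) (fun k hk => (hanti k hk).le) hn hk

namespace BirthDeath

variable {lam mu pi : ℕ → ℝ} {q : ℕ → ℝ → ℝ}

theorem pi_pos (hlam : ∀ n, 0 < lam n) (hmu : ∀ n, 1 ≤ n → 0 < mu n) (hpi0 : pi 0 = 1)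
    (hpi : ∀ n, pi (n + 1) = pi n * lam n / mu (n + 1)) (n : ℕ) : 0 < pi n := by
  induction n with
  | zero => simp [hpi0]
  | succ n ih => rw [hpi]; exact div_pos (mul_pos ih (hlam n)) (hmu _ n.succ_pos)

theorem mu_mul_pi_succ (hmu : ∀ n, 1 ≤ n → 0 < mu n)
    (hpi : ∀ n, pi (n + 1) = pi n * lam n / mu (n + 1)) (n : ℕ) :
    mu (n + 1) * pi (n + 1) = lam n * pi n := by
  rw [hpi]; field_simp [(hmu _ n.succ_pos).ne']

theorem exists_ge_mul_lt_zero (hlam : ∀ n, 0 < lam n) (hpi : ∀ n, 0 < pi n)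
    (hbal : ∀ n, mu (n + 1) * pi (n + 1) = lam n * pi n) (hq₀ : ∀ x, q 0 x = 1)
    (hrec : ∀ n x, lam (n + 1) * q (n + 2) x
      = (lam (n + 1) + mu (n + 1) - x) * q (n + 1) x - mu (n + 1) * q n x)
    (hK : ¬ Summable pi) (hL : ¬ Summable fun n => (lam n * pi n)⁻¹) {x : ℝ} (hx : 0 < x)
    {c : ℝ} (hc : c ≠ 0) (m : ℕ) : ∃ n ≥ m, c * q n x < 0 :=
  exists_ge_lt_zero_of_sturmLiouville (q := fun n => c * q n x) hx
    (fun n => mul_pos (hlam n) (hpi n)) hpi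
    (fun n => by
      linear_combination c * pi (n + 1) * hrec n x + c * (q (n + 1) x - q n x) * hbal n)
    (by simp [hq₀, hc]) hL hK m

theorem neg_one_pow_countBelow_mul_pos {z : ℕ → ℕ → ℝ} (hlam : ∀ n, 0 < lam n)
    (hq₀ : ∀ x, q 0 x = 1) (hq₁ : ∀ x, lam 0 * q 1 x = lam 0 + mu 0 - x)
    (hrec : ∀ n x, lam (n + 1) * q (n + 2) x
      = (lam (n + 1) + mu (n + 1) - x) * q (n + 1) x - mu (n + 1) * q n x)
    (hzlt : ∀ n j, 1 ≤ j → j + 1 ≤ n → z n j < z n (j + 1))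
    (hzero : ∀ n j, 1 ≤ j → j ≤ n → q n (z n j) = 0) {n : ℕ} {x : ℝ} (hqx : q n x ≠ 0) :
    0 < (-1) ^ countBelow (z n) n x * q n x := by
  have heval := eval_bdPoly (fun k => (hlam k).ne') hq₀ hq₁ hrec n
  have hdeg := natDegree_bdPoly (B := mu) (fun k => (hlam k).ne') n
  rw [← heval] at hqx ⊢
  refine neg_one_pow_card_filter_lt_mul_eval_pos (t := Icc 1 n)
    (by simpa using (strictMonoOn_Icc_of_lt_succ (hzlt n)).injOn) (fun j hj => ?_)
    (by simp [hdeg]) (by rw [hdeg]; exact neg_one_pow_mul_leadingCoeff_bdPoly_pos hlam n) hqx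
  rw [IsRoot, heval]
  exact hzero n j (mem_Icc.1 hj).1 (mem_Icc.1 hj).2

end BirthDeath

theorem stmt5_general
    (lam mu : ℕ → ℝ) (pi : ℕ → ℝ)
    (hlam : ∀ n, 0 < lam n) (hmu : ∀ n, 1 ≤ n → 0 < mu n)
    (hpi0 : pi 0 = 1) (hpi : ∀ n, pi (n + 1) = pi n * lam n / mu (n + 1))
    (Kinf Linf : ℝ≥0∞)
    (hKinf : Kinf = ∑' i, ENNReal.ofReal (pi i))
    (hLinf : Linf = ∑' i, ENNReal.ofReal (1 / (lam i * pi i)))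
    (Q : ℕ → ℕ → ℝ → ℝ)
    (hQ0 : ∀ l x, Q l 0 x = 1)
    (hQ1 : ∀ l x, lam l * Q l 1 x = lam l + mu l - x)
    (hQrec : ∀ l n x, lam (n + 1 + l) * Q l (n + 2) x
      = (lam (n + 1 + l) + mu (n + 1 + l) - x) * Q l (n + 1) x - mu (n + 1 + l) * Q l n x)
    (z : ℕ → ℕ → ℕ → ℝ) (xi : ℕ → ℕ → ℝ)
    (hzpos : ∀ l n i, 1 ≤ i → i ≤ n → 0 < z l n i)
    (hzlt : ∀ l n i, 1 ≤ i → i + 1 ≤ n → z l n i < z l n (i + 1))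
    (hzero : ∀ l n i, 1 ≤ i → i ≤ n → Q l n (z l n i) = 0)
    (hsep1 : ∀ l n i, 1 ≤ i → i ≤ n → z l (n + 1) i < z l n i)
    (hxi : ∀ l i, 1 ≤ i → Tendsto (fun n => z l n i) atTop (nhds (xi l i)))
    (hKtop : Kinf = ⊤) (hLtop : Linf = ⊤) :
    ∀ l i, 1 ≤ i → xi l i = 0 := by
  intro l i hi
  have hpi_pos := BirthDeath.pi_pos hlam hmu hpi0 hpi
  have hbal (k : ℕ) : mu (k + 1 + l) * pi (k + 1 + l) = lam (k + l) * pi (k + l) := by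
    simpa [add_right_comm] using BirthDeath.mu_mul_pi_succ hmu hpi (k + l)
  have hKl : ¬ Summable fun k => pi (k + l) :=
    (summable_nat_add_iff l).not.2 fun hs => hs.tsum_ofReal_ne_top (hKinf ▸ hKtop)
  have hLl : ¬ Summable fun k => (lam (k + l) * pi (k + l))⁻¹ := by
    simp only [one_div] at hLinf
    exact (summable_nat_add_iff l (f := fun k => (lam k * pi k)⁻¹)).not.2
      fun hs => hs.tsum_ofReal_ne_top (hLinf ▸ hLtop)
  refine eq_zero_of_tendsto_of_forall_exists_lt (fun n hn => hzpos l n i hi hn)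
    (fun n hn => hsep1 l n i hi hn) (hxi l i hi) fun x hx => ?_
  refine exists_lt_of_sign_oscillation (q := fun n => Q l n x) (hzlt l) (hsep1 l)
    (fun n => ?_) (fun c hc => ?_) hi
  · exact BirthDeath.neg_one_pow_countBelow_mul_pos (mu := fun k => mu (k + l))
      (fun k => hlam (k + l)) (hQ0 l) (by simpa using hQ1 l) (hQrec l) (hzlt l) (hzero l)
  · exact BirthDeath.exists_ge_mul_lt_zero (mu := fun k => mu (k + l)) (fun k => hlam (k + l))
      (fun k => hpi_pos (k + l)) hbal (hQ0 l) (hQrec l) hKl hLl hx hc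

theorem stmt5
    (lam mu : ℕ → ℝ) (pi : ℕ → ℝ)
    (hlam : ∀ n, 0 < lam n) (hmu0 : 0 ≤ mu 0) (hmu : ∀ n, 1 ≤ n → 0 < mu n)
    (hpi0 : pi 0 = 1) (hpi : ∀ n, pi (n + 1) = pi n * lam n / mu (n + 1))
    (K : ℕ → ℝ≥0∞) (hK : ∀ n, K n = ∑ i ∈ Finset.range (n + 1), ENNReal.ofReal (pi i))
    (Kinf Linf C D : ℝ≥0∞)
    (hKinf : Kinf = ∑' i, ENNReal.ofReal (pi i))
    (hLinf : Linf = ∑' i, ENNReal.ofReal (1 / (lam i * pi i)))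
    (hC : C = ∑' n, ENNReal.ofReal (1 / (lam n * pi n)) * K n)
    (hD : D = ∑' n, ENNReal.ofReal (1 / (lam n * pi n)) * (Kinf - K n))
    (Q : ℕ → ℕ → ℝ → ℝ)
    (hQ0 : ∀ l x, Q l 0 x = 1)
    (hQ1 : ∀ l x, lam l * Q l 1 x = lam l + mu l - x)
    (hQrec : ∀ l n x, lam (n + 1 + l) * Q l (n + 2) x
      = (lam (n + 1 + l) + mu (n + 1 + l) - x) * Q l (n + 1) x - mu (n + 1 + l) * Q l n x)
    (z : ℕ → ℕ → ℕ → ℝ) (xi : ℕ → ℕ → ℝ)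
    (hzpos : ∀ l n i, 1 ≤ i → i ≤ n → 0 < z l n i)
    (hzlt : ∀ l n i, 1 ≤ i → i + 1 ≤ n → z l n i < z l n (i + 1))
    (hzero : ∀ l n i, 1 ≤ i → i ≤ n → Q l n (z l n i) = 0)
    (hzall : ∀ l n, 1 ≤ n → ∀ y, Q l n y = 0 → ∃ i, 1 ≤ i ∧ i ≤ n ∧ y = z l n i)
    (hsep1 : ∀ l n i, 1 ≤ i → i ≤ n → z l (n + 1) i < z l n i)
    (hsep2 : ∀ l n i, 1 ≤ i → i ≤ n → z l n i < z l (n + 1) (i + 1))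
    (hxi : ∀ l i, 1 ≤ i → Tendsto (fun n => z l n i) atTop (nhds (xi l i)))
    (hKtop : Kinf = ⊤) (hLtop : Linf = ⊤) :
    ∀ l i, 1 ≤ i → xi l i = 0 :=
  stmt5_general lam mu pi hlam hmu hpi0 hpi Kinf Linf hKinf hLinf Q hQ0 hQ1 hQrec z xi hzpos hzlt
    hzero hsep1 hxi hKtop hLtop
end

section
/- (Theorem 2, first-hitting-time asymptotics from 0, in polynomial form) (a) If C < ∞ and D = ∞, then L_∞ < ∞, the limits ξ_i are strictly positive with Σ_{i=1}^∞ 1/ξ_i < ∞, and for every real s < 0, lim_{n→∞} 1/Q_n(s) = (1 + μ_0 L_∞)^{−1} ∏_{i=1}^∞ ξ_i/(ξ_i − s), the infinite product converging. (b) If C = ∞, then for every real s < 0, lim_{n→∞} 1/Q_n(s) = 0. -/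
/-!
Write `ℓₙ = (λₙπₙ)⁻¹` and `Kₙ = π₀ + ⋯ + πₙ`. Summing the recurrence against `π` gives
`λₙπₙ (Qₙ₊₁(x) - Qₙ(x)) = μ₀ - x ∑_{j ≤ n} πⱼ Qⱼ(x)`, so for `s ≤ 0` the sequence `Qₙ(s)` is
increasing, and its increments lie between `(-s) ℓₙ Kₙ` and `Qₙ(s) ℓₙ (μ₀ + (-s) Kₙ)`.
If `C = ∑ ℓₙ Kₙ` diverges, `Qₙ(s) → ∞`. If it converges, `Qₙ(-1)` stays bounded, and
`Qₙ(s) = Qₙ(0) ∏ᵢ (xₙᵢ - s) / xₙᵢ` turns this into a uniform bound on `∑ᵢ 1 / xₙᵢ`; hence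
`ξᵢ > 0` and `∑ 1 / ξᵢ < ∞`. As `xₙᵢ` decreases to `ξᵢ`, the finite products converge to the
infinite one, while `Qₙ(0) = 1 + μ₀ (ℓ₀ + ⋯ + ℓₙ₋₁) → 1 + μ₀ L_∞`.
-/

open Filter Topology ENNReal MeasureTheory
open Finset

theorem one_add_sum_le_prod_one_add {ι : Type*} (s : Finset ι) {t : ι → ℝ}
    (ht : ∀ i ∈ s, 0 ≤ t i) : 1 + ∑ i ∈ s, t i ≤ ∏ i ∈ s, (1 + t i) := by
  classical
  induction s using Finset.induction_on with
  | empty => simp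
  | insert a s ha ih =>
    rw [sum_insert ha, prod_insert ha]
    have hs := ih fun i hi => ht i (mem_insert_of_mem hi)
    have hta := ht a (mem_insert_self a s)
    nlinarith [sum_nonneg fun i hi => ht i (mem_insert_of_mem hi)]

-- `(w i - -1) / w i` is the factor at `x = -1` of a factorization `q x = q 0 * ∏ (w i - x) / w i`.
theorem sum_inv_le_mul_prod {ι : Type*} {s : Finset ι} {w : ι → ℝ} {a : ℝ}
    (hw : ∀ i ∈ s, 0 < w i) (ha : 1 ≤ a) :
    ∑ i ∈ s, (w i)⁻¹ ≤ a * ∏ i ∈ s, (w i - -1) / w i := by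
  have hprod : ∏ i ∈ s, (w i - -1) / w i = ∏ i ∈ s, (1 + (w i)⁻¹) :=
    prod_congr rfl fun i hi => by field_simp [(hw i hi).ne']; ring
  have hinv : ∀ i ∈ s, 0 ≤ (w i)⁻¹ := fun i hi => inv_nonneg.2 (hw i hi).le
  have := one_add_sum_le_prod_one_add s hinv
  rw [hprod]
  nlinarith [sum_nonneg hinv]

theorem tendsto_prod_range_of_le_of_le_one {f : ℕ → ℕ → ℝ} {g : ℕ → ℝ} {P : ℝ}
    (hg : ∀ i, 0 ≤ g i) (hgf : ∀ n i, i < n → g i ≤ f n i) (hf : ∀ n i, i < n → f n i ≤ 1)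
    (hfg : ∀ i, Tendsto (f · i) atTop (𝓝 (g i)))
    (hP : Tendsto (fun m => ∏ i ∈ range m, g i) atTop (𝓝 P)) :
    Tendsto (fun n => ∏ i ∈ range n, f n i) atTop (𝓝 P) := by
  refine tendsto_order.2 ⟨fun a ha => ?_, fun a ha => ?_⟩
  · filter_upwards [hP.eventually (lt_mem_nhds ha)] with n hn
    exact hn.trans_le (prod_le_prod (fun i _ => hg i) fun i hi => hgf n i (mem_range.1 hi))
  · obtain ⟨m, hm⟩ := (hP.eventually (gt_mem_nhds ha)).exists
    have hfin : Tendsto (fun n => ∏ i ∈ range m, f n i) atTop (𝓝 (∏ i ∈ range m, g i)) :=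
      tendsto_finsetProd _ fun i _ => hfg i
    filter_upwards [hfin.eventually (gt_mem_nhds hm), eventually_ge_atTop m] with n hn hmn
    refine lt_of_le_of_lt (prod_le_prod_of_subset_of_le_one (range_subset_range.2 hmn)
      (fun i hi => (hg i).trans (hgf n i (mem_range.1 hi)))
      fun i hi _ => hf n i (mem_range.1 hi)) hn

theorem multipliable_div_sub {ι : Type*} {ξ : ι → ℝ} (hξ : ∀ i, 0 < ξ i)
    (hsum : Summable fun i => (ξ i)⁻¹) {s : ℝ} (hs : s ≤ 0) :
    Multipliable fun i => ξ i / (ξ i - s) := by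
  have hsub : ∀ i, 0 < ξ i - s := fun i => by linarith [hξ i]
  have hbound : ∀ i, ‖s / (ξ i - s)‖ ≤ -s * (ξ i)⁻¹ := fun i => by
    rw [Real.norm_eq_abs, abs_div, abs_of_nonpos hs, abs_of_pos (hsub i), ← div_eq_mul_inv]
    exact div_le_div_of_nonneg_left (neg_nonneg.2 hs) (hξ i) (by linarith)
  convert Real.multipliable_one_add_of_summable ((hsum.mul_left (-s)).of_norm_bounded hbound)
    using 2 with i
  field_simp [(hsub i).ne']
  ring

theorem tsum_ofReal_ne_top_iff_summable {ι : Type*} {f : ι → ℝ} (hf : ∀ i, 0 ≤ f i) :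
    ∑' i, ENNReal.ofReal (f i) ≠ ∞ ↔ Summable f :=
  ⟨fun h => by simpa [ENNReal.toReal_ofReal (hf _)] using ENNReal.summable_toReal h,
    Summable.tsum_ofReal_ne_top⟩

namespace Polynomial

variable {K ι : Type*} [Field K] {p : K[X]} {s : Finset ι} {z : ι → K}

theorem eq_C_leadingCoeff_mul_prod_X_sub_C (hz : Set.InjOn z s) (hdeg : p.natDegree ≤ #s)
    (hroot : ∀ i ∈ s, p.IsRoot (z i)) :
    p = C p.leadingCoeff * ∏ i ∈ s, (X - C (z i)) := by
  refine eq_leadingCoeff_mul_of_monic_of_dvd_of_natDegree_le (monic_prod_X_sub_C z s) ?_ ?_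
  · refine Finset.prod_dvd_of_coprime (fun i hi j hj hij => ?_)
      fun i hi => dvd_iff_isRoot.2 (hroot i hi)
    exact isCoprime_X_sub_C_of_isUnit_sub (sub_ne_zero.2 (hz.ne hi hj hij)).isUnit
  · rwa [natDegree_finsetProd_X_sub_C_eq_card]

theorem eval_eq_eval_zero_mul_prod (hz : Set.InjOn z s) (hdeg : p.natDegree ≤ #s)
    (hroot : ∀ i ∈ s, p.IsRoot (z i)) (hz0 : ∀ i ∈ s, z i ≠ 0) (x : K) :
    p.eval x = p.eval 0 * ∏ i ∈ s, (z i - x) / z i := by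
  rw [eq_C_leadingCoeff_mul_prod_X_sub_C hz hdeg hroot]
  simp only [eval_mul, eval_C, eval_prod, eval_sub, eval_X, zero_sub, mul_assoc,
    ← Finset.prod_mul_distrib]
  congr 1
  refine Finset.prod_congr rfl fun i hi => ?_
  field_simp [hz0 i hi]
  ring

end Polynomial

section Zeros

variable {w : ℕ → ℕ → ℝ} {ξ : ℕ → ℝ}

theorem pos_of_sum_inv_le {E : ℝ} (hw : ∀ n i, i < n → 0 < w n i)
    (hS : ∀ n, ∑ i ∈ range n, (w n i)⁻¹ ≤ E) (hlim : ∀ i, Tendsto (w · i) atTop (𝓝 (ξ i)))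
    (i : ℕ) : 0 < ξ i := by
  have hinv_le : ∀ n, i < n → (w n i)⁻¹ ≤ E := fun n hi =>
    (single_le_sum (fun j hj => inv_nonneg.2 (hw n j (mem_range.1 hj)).le)
      (mem_range.2 hi)).trans (hS n)
  have hE : 0 < E := (inv_pos.2 (hw (i + 1) i i.lt_succ_self)).trans_le (hinv_le _ i.lt_succ_self)
  refine (inv_pos.2 hE).trans_le (ge_of_tendsto (hlim i) ?_)
  filter_upwards [eventually_gt_atTop i] with n hn
  exact inv_le_of_inv_le₀ (hw n i hn) (hinv_le n hn)

theorem summable_inv_of_sum_inv_le {E : ℝ} (hw : ∀ n i, i < n → 0 < w n i)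
    (hS : ∀ n, ∑ i ∈ range n, (w n i)⁻¹ ≤ E) (hlim : ∀ i, Tendsto (w · i) atTop (𝓝 (ξ i))) :
    Summable fun i => (ξ i)⁻¹ := by
  have hξ := pos_of_sum_inv_le hw hS hlim
  refine summable_of_sum_range_le (c := E) (fun i => (inv_pos.2 (hξ i)).le) fun m => ?_
  refine le_of_tendsto (tendsto_finsetSum _ fun i _ => (hlim i).inv₀ (hξ i).ne') ?_
  filter_upwards [eventually_ge_atTop m] with n hn
  exact (sum_le_sum_of_subset_of_nonneg (range_subset_range.2 hn)
    fun i hi _ => (inv_pos.2 (hw n i (mem_range.1 hi))).le).trans (hS n)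

theorem le_of_antitone_of_tendsto (hanti : ∀ n i, i < n → w (n + 1) i ≤ w n i)
    (hlim : ∀ i, Tendsto (w · i) atTop (𝓝 (ξ i))) {n i : ℕ} (hi : i < n) : ξ i ≤ w n i := by
  have hmono : AntitoneOn (w · i) (Set.Ioi i) :=
    antitoneOn_of_add_one_le Set.ordConnected_Ioi fun a _ ha _ => hanti a i ha
  refine le_of_tendsto (hlim i) ?_
  filter_upwards [eventually_ge_atTop n] with m hm
  exact hmono hi (hi.trans_le hm) hm

theorem tendsto_prod_div_sub (hw : ∀ n i, i < n → 0 < w n i)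
    (hanti : ∀ n i, i < n → w (n + 1) i ≤ w n i) (hlim : ∀ i, Tendsto (w · i) atTop (𝓝 (ξ i)))
    (hξ : ∀ i, 0 < ξ i) (hsum : Summable fun i => (ξ i)⁻¹) {s : ℝ} (hs : s ≤ 0) :
    Tendsto (fun n => ∏ i ∈ range n, w n i / (w n i - s)) atTop
      (𝓝 (∏' i, ξ i / (ξ i - s))) := by
  refine tendsto_prod_range_of_le_of_le_one (fun i => div_nonneg (hξ i).le (by linarith [hξ i]))
    (fun n i hi => ?_) (fun n i hi => (div_le_one (by linarith [hw n i hi])).2 (by linarith))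
    (fun i => (hlim i).div ((hlim i).sub_const s) (by linarith [hξ i]))
    (multipliable_div_sub hξ hsum hs).hasProd.tendsto_prod_nat
  have hle := le_of_antitone_of_tendsto hanti hlim hi
  rw [div_le_div_iff₀ (by linarith [hξ i]) (by linarith [hw n i hi])]
  nlinarith

end Zeros

theorem summable_inv_of_summable_inv_mul_sum {lam pi : ℕ → ℝ} (hpi0 : pi 0 = 1)
    (hlam : ∀ n, 0 < lam n) (hpi : ∀ n, 0 < pi n)
    (hC : Summable fun m => (lam m * pi m)⁻¹ * ∑ j ∈ range (m + 1), pi j) :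
    Summable fun m => (lam m * pi m)⁻¹ :=
  hC.of_nonneg_of_le (fun m => (inv_pos.2 (mul_pos (hlam m) (hpi m))).le) fun m =>
    le_mul_of_one_le_right (inv_pos.2 (mul_pos (hlam m) (hpi m))).le
      (hpi0 ▸ single_le_sum (fun j _ => (hpi j).le) (mem_range.2 m.succ_pos))

section BirthDeath

open Polynomial

noncomputable def birthDeathPoly (lam mu : ℕ → ℝ) : ℕ → ℝ[X]
  | 0 => 1
  | 1 => C (lam 0)⁻¹ * (C (lam 0 + mu 0) - X)
  | n + 2 => C (lam (n + 1))⁻¹ *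
      ((C (lam (n + 1) + mu (n + 1)) - X) * birthDeathPoly lam mu (n + 1)
        - C (mu (n + 1)) * birthDeathPoly lam mu n)

theorem natDegree_birthDeathPoly_le (lam mu : ℕ → ℝ) (n : ℕ) :
    (birthDeathPoly lam mu n).natDegree ≤ n := by
  induction n using Nat.twoStepInduction with
  | zero => simp [birthDeathPoly]
  | one => simp only [birthDeathPoly]; compute_degree
  | more n ih₁ ih₂ =>
    have hlin : (C (lam (n + 1) + mu (n + 1)) - X).natDegree ≤ 1 := by compute_degree
    refine (natDegree_C_mul_le _ _).trans ((natDegree_sub_le _ _).trans (max_le ?_ ?_))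
    · exact natDegree_mul_le_of_le hlin ih₂ |>.trans (by omega)
    · exact (natDegree_C_mul_le _ _).trans (ih₁.trans (by omega))

structure BirthDeathRecurrence (lam mu : ℕ → ℝ) (q : ℕ → ℝ → ℝ) : Prop where
  zero : ∀ x, q 0 x = 1
  one : ∀ x, lam 0 * q 1 x = lam 0 + mu 0 - x
  succ_succ : ∀ n x, lam (n + 1) * q (n + 2) x =
    (lam (n + 1) + mu (n + 1) - x) * q (n + 1) x - mu (n + 1) * q n x

namespace BirthDeathRecurrence

variable {lam mu pi : ℕ → ℝ} {q : ℕ → ℝ → ℝ}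

theorem eval_birthDeathPoly (hq : BirthDeathRecurrence lam mu q) (hlam : ∀ n, lam n ≠ 0)
    (n : ℕ) (x : ℝ) : (birthDeathPoly lam mu n).eval x = q n x := by
  induction n using Nat.twoStepInduction with
  | zero => simp [birthDeathPoly, hq.zero]
  | one =>
    simp only [birthDeathPoly, eval_mul, eval_C, eval_sub, eval_X]
    field_simp [hlam 0]
    linarith [hq.one x]
  | more n ih₁ ih₂ =>
    simp only [birthDeathPoly, eval_mul, eval_C, eval_sub, eval_X, ih₁, ih₂]
    field_simp [hlam (n + 1)]
    linarith [hq.succ_succ n x]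

theorem eq_eval_zero_mul_prod (hq : BirthDeathRecurrence lam mu q) (hlam : ∀ n, lam n ≠ 0)
    {n : ℕ} {w : ℕ → ℝ} (hw : StrictMonoOn w (Set.Iio n)) (hroot : ∀ i < n, q n (w i) = 0)
    (hw0 : ∀ i < n, w i ≠ 0) (x : ℝ) :
    q n x = q n 0 * ∏ i ∈ range n, (w i - x) / w i := by
  simp only [← hq.eval_birthDeathPoly hlam n]
  refine eval_eq_eval_zero_mul_prod (by simpa using hw.injOn)
    (by simpa using natDegree_birthDeathPoly_le lam mu n) (fun i hi => ?_) (by simpa) x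
  simpa [IsRoot, hq.eval_birthDeathPoly hlam] using hroot i (by simpa using hi)

theorem mul_sub_eq (hq : BirthDeathRecurrence lam mu q) (hpi0 : pi 0 = 1)
    (hbal : ∀ n, mu (n + 1) * pi (n + 1) = lam n * pi n) (n : ℕ) (x : ℝ) :
    lam n * pi n * (q (n + 1) x - q n x) = mu 0 - x * ∑ j ∈ range (n + 1), pi j * q j x := by
  induction n with
  | zero =>
    simp only [zero_add, sum_range_one, hpi0, hq.zero, mul_one]
    linear_combination hq.one x
  | succ n ih =>
    rw [sum_range_succ]
    linear_combination pi (n + 1) * hq.succ_succ n x + ih + (q (n + 1) x - q n x) * hbal n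

theorem succ_sub_eq (hq : BirthDeathRecurrence lam mu q) (hpi0 : pi 0 = 1)
    (hbal : ∀ n, mu (n + 1) * pi (n + 1) = lam n * pi n) (hlp : ∀ n, lam n * pi n ≠ 0)
    (n : ℕ) (x : ℝ) :
    q (n + 1) x - q n x = (lam n * pi n)⁻¹ * (mu 0 - x * ∑ j ∈ range (n + 1), pi j * q j x) := by
  rw [← hq.mul_sub_eq hpi0 hbal, inv_mul_cancel_left₀ (hlp n)]

theorem eval_zero_eq (hq : BirthDeathRecurrence lam mu q) (hpi0 : pi 0 = 1)
    (hbal : ∀ n, mu (n + 1) * pi (n + 1) = lam n * pi n) (hlp : ∀ n, lam n * pi n ≠ 0)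
    (n : ℕ) : q n 0 = 1 + mu 0 * ∑ m ∈ range n, (lam m * pi m)⁻¹ := by
  have h := sum_range_sub (fun m => q m 0) n
  simp only [hq.succ_sub_eq hpi0 hbal hlp, zero_mul, sub_zero, hq.zero] at h
  rw [mul_sum]
  linarith [sum_congr rfl fun m (_ : m ∈ range n) => mul_comm (lam m * pi m)⁻¹ (mu 0)]

section Nonpos

variable (hq : BirthDeathRecurrence lam mu q) (hpi0 : pi 0 = 1)
  (hbal : ∀ n, mu (n + 1) * pi (n + 1) = lam n * pi n) (hlam : ∀ n, 0 < lam n)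
  (hpi : ∀ n, 0 < pi n) (hmu0 : 0 ≤ mu 0) {s : ℝ} (hs : s ≤ 0)
include hq hpi0 hbal hlam hpi hmu0 hs

theorem le_succ_of_nonneg {n : ℕ} (hnn : ∀ j ≤ n, 0 ≤ q j s) : q n s ≤ q (n + 1) s := by
  rw [← sub_nonneg, hq.succ_sub_eq hpi0 hbal fun n => (mul_pos (hlam n) (hpi n)).ne']
  have hS : 0 ≤ ∑ j ∈ range (n + 1), pi j * q j s :=
    sum_nonneg fun j hj => mul_nonneg (hpi j).le (hnn j (Nat.lt_succ_iff.1 (mem_range.1 hj)))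
  exact mul_nonneg (inv_nonneg.2 (mul_pos (hlam n) (hpi n)).le) (by nlinarith)

theorem one_le (n : ℕ) : 1 ≤ q n s := by
  induction n using Nat.strong_induction_on with
  | _ n ih =>
    cases n with
    | zero => rw [hq.zero]
    | succ m =>
      exact (ih m m.lt_succ_self).trans <| hq.le_succ_of_nonneg hpi0 hbal hlam hpi hmu0 hs
        fun j hj => zero_le_one.trans (ih j (Nat.lt_succ_of_le hj))

theorem monotone : Monotone (q · s) :=
  monotone_nat_of_le_succ fun _ => hq.le_succ_of_nonneg hpi0 hbal hlam hpi hmu0 hs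
    fun j _ => zero_le_one.trans (hq.one_le hpi0 hbal hlam hpi hmu0 hs j)

theorem one_add_mul_sum_le (n : ℕ) :
    1 + -s * ∑ m ∈ range n, (lam m * pi m)⁻¹ * ∑ j ∈ range (m + 1), pi j ≤ q n s := by
  have hstep : ∀ m, -s * ((lam m * pi m)⁻¹ * ∑ j ∈ range (m + 1), pi j) ≤ q (m + 1) s - q m s := by
    intro m
    rw [hq.succ_sub_eq hpi0 hbal fun n => (mul_pos (hlam n) (hpi n)).ne']
    have hKS : ∑ j ∈ range (m + 1), pi j ≤ ∑ j ∈ range (m + 1), pi j * q j s :=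
      sum_le_sum fun j _ =>
        le_mul_of_one_le_right (hpi j).le (hq.one_le hpi0 hbal hlam hpi hmu0 hs j)
    have hℓ := inv_pos.2 (mul_pos (hlam m) (hpi m))
    nlinarith [mul_nonneg hℓ.le hmu0,
      mul_nonneg (mul_nonneg hℓ.le (neg_nonneg.2 hs)) (sub_nonneg.2 hKS)]
  calc 1 + -s * ∑ m ∈ range n, (lam m * pi m)⁻¹ * ∑ j ∈ range (m + 1), pi j
      ≤ q 0 s + ∑ m ∈ range n, (q (m + 1) s - q m s) := by
        rw [hq.zero, mul_sum]; gcongr with m; exact hstep m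
    _ = q n s := by rw [sum_range_sub (q · s)]; ring

theorem le_exp_tsum (hℓ : Summable fun m => (lam m * pi m)⁻¹)
    (hℓK : Summable fun m => (lam m * pi m)⁻¹ * ∑ j ∈ range (m + 1), pi j) (n : ℕ) :
    q n s ≤ Real.exp (∑' m, (lam m * pi m)⁻¹ * (mu 0 + -s * ∑ j ∈ range (m + 1), pi j)) := by
  set a : ℕ → ℝ := fun m => (lam m * pi m)⁻¹ * (mu 0 + -s * ∑ j ∈ range (m + 1), pi j)
  have ha : ∀ m, 0 ≤ a m := fun m =>
    mul_nonneg (inv_nonneg.2 (mul_pos (hlam m) (hpi m)).le)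
      (add_nonneg hmu0 (mul_nonneg (neg_nonneg.2 hs) (sum_nonneg fun j _ => (hpi j).le)))
  have ha_sum : Summable a := ((hℓ.mul_left (mu 0)).add (hℓK.mul_left (-s))).congr fun m => by
    simp only [a]; ring
  have hstep : ∀ m, q (m + 1) s ≤ q m s * (1 + a m) := by
    intro m
    have hqm := hq.one_le hpi0 hbal hlam hpi hmu0 hs m
    have hSK : ∑ j ∈ range (m + 1), pi j * q j s ≤ (∑ j ∈ range (m + 1), pi j) * q m s := by
      rw [sum_mul]
      exact sum_le_sum fun j hj => mul_le_mul_of_nonneg_left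
        (hq.monotone hpi0 hbal hlam hpi hmu0 hs (Nat.lt_succ_iff.1 (mem_range.1 hj))) (hpi j).le
    have hinc := hq.succ_sub_eq hpi0 hbal (fun n => (mul_pos (hlam n) (hpi n)).ne') m s
    have hℓm := inv_pos.2 (mul_pos (hlam m) (hpi m))
    simp only [a]
    nlinarith [mul_le_mul_of_nonneg_left hSK (mul_nonneg hℓm.le (neg_nonneg.2 hs)),
      mul_le_mul_of_nonneg_left hqm (mul_nonneg hℓm.le hmu0)]
  have hprod : q n s ≤ ∏ m ∈ range n, (1 + a m) := by
    induction n with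
    | zero => simp [hq.zero]
    | succ n ih =>
      rw [prod_range_succ]
      exact (hstep n).trans (mul_le_mul_of_nonneg_right ih (by linarith [ha n]))
  calc q n s ≤ Real.exp (∑ m ∈ range n, a m) := hprod.trans (Real.prod_one_add_le_exp_sum _ ha)
    _ ≤ Real.exp (∑' m, a m) := Real.exp_le_exp.2 (ha_sum.sum_le_tsum _ fun m _ => ha m)

end Nonpos

theorem tendsto_one_div_zero (hq : BirthDeathRecurrence lam mu q) (hpi0 : pi 0 = 1)
    (hbal : ∀ n, mu (n + 1) * pi (n + 1) = lam n * pi n) (hlam : ∀ n, 0 < lam n)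
    (hpi : ∀ n, 0 < pi n) (hmu0 : 0 ≤ mu 0)
    (hC : ¬ Summable fun m => (lam m * pi m)⁻¹ * ∑ j ∈ range (m + 1), pi j)
    {s : ℝ} (hs : s < 0) : Tendsto (fun n => 1 / q n s) atTop (𝓝 0) := by
  have hsum := (not_summable_iff_tendsto_nat_atTop_of_nonneg fun m =>
    mul_nonneg (inv_nonneg.2 (mul_pos (hlam m) (hpi m)).le) (sum_nonneg fun j _ => (hpi j).le)).1 hC
  have htop : Tendsto (q · s) atTop atTop :=
    tendsto_atTop_mono (hq.one_add_mul_sum_le hpi0 hbal hlam hpi hmu0 hs.le)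
      (tendsto_atTop_add_const_left _ 1 (hsum.const_mul_atTop (neg_pos.2 hs)))
  simp only [one_div]
  exact htop.inv_tendsto_atTop

variable {w : ℕ → ℕ → ℝ} {ξ : ℕ → ℝ}

theorem tendsto_one_div_of_summable (hq : BirthDeathRecurrence lam mu q) (hpi0 : pi 0 = 1)
    (hbal : ∀ n, mu (n + 1) * pi (n + 1) = lam n * pi n) (hlam : ∀ n, 0 < lam n)
    (hpi : ∀ n, 0 < pi n) (hmu0 : 0 ≤ mu 0)
    (hC : Summable fun m => (lam m * pi m)⁻¹ * ∑ j ∈ range (m + 1), pi j)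
    (hw : ∀ n i, i < n → 0 < w n i) (hmono : ∀ n i, i + 1 < n → w n i < w n (i + 1))
    (hroot : ∀ n i, i < n → q n (w n i) = 0) (hanti : ∀ n i, i < n → w (n + 1) i ≤ w n i)
    (hlim : ∀ i, Tendsto (w · i) atTop (𝓝 (ξ i))) :
    (∀ i, 0 < ξ i) ∧ Summable (fun i => (ξ i)⁻¹) ∧ ∀ s ≤ 0,
      Multipliable (fun i => ξ i / (ξ i - s)) ∧
      Tendsto (fun n => 1 / q n s) atTop
        (𝓝 ((1 + mu 0 * ∑' m, (lam m * pi m)⁻¹)⁻¹ * ∏' i, ξ i / (ξ i - s))) := by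
  have hlp : ∀ m, 0 < lam m * pi m := fun m => mul_pos (hlam m) (hpi m)
  have hℓ := summable_inv_of_summable_inv_mul_sum hpi0 hlam hpi hC
  have hprod : ∀ n x, q n x = q n 0 * ∏ i ∈ range n, (w n i - x) / w n i := fun n =>
    hq.eq_eval_zero_mul_prod (fun m => (hlam m).ne')
      (strictMonoOn_of_lt_add_one Set.ordConnected_Iio fun i _ _ hi => hmono n i hi)
      (hroot n) fun i hi => (hw n i hi).ne'
  have hS : ∀ n, ∑ i ∈ range n, (w n i)⁻¹ ≤ _ := fun n =>
    (sum_inv_le_mul_prod (fun i hi => hw n i (mem_range.1 hi))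
      (hq.one_le hpi0 hbal hlam hpi hmu0 le_rfl n)).trans
      ((hprod n (-1)).symm.le.trans (hq.le_exp_tsum hpi0 hbal hlam hpi hmu0 (by norm_num) hℓ hC n))
  have hξ := pos_of_sum_inv_le hw hS hlim
  have hsum := summable_inv_of_sum_inv_le hw hS hlim
  have hA : Tendsto (q · 0) atTop (𝓝 (1 + mu 0 * ∑' m, (lam m * pi m)⁻¹)) := by
    simp_rw [hq.eval_zero_eq hpi0 hbal fun m => (hlp m).ne']
    exact (hℓ.hasSum.tendsto_sum_nat.const_mul _).const_add 1
  have hA0 : 1 + mu 0 * ∑' m, (lam m * pi m)⁻¹ ≠ 0 :=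
    (add_pos_of_pos_of_nonneg one_pos
      (mul_nonneg hmu0 (tsum_nonneg fun m => (inv_pos.2 (hlp m)).le))).ne'
  refine ⟨hξ, hsum, fun s hs => ⟨multipliable_div_sub hξ hsum hs, ?_⟩⟩
  refine ((hA.inv₀ hA0).mul (tendsto_prod_div_sub hw hanti hlim hξ hsum hs)).congr fun n => ?_
  rw [hprod n s, one_div, mul_inv, ← Finset.prod_inv_distrib]
  simp_rw [inv_div]

end BirthDeathRecurrence

end BirthDeath

theorem stmt17_general
    (lam mu : ℕ → ℝ) (pi : ℕ → ℝ)
    (hlam : ∀ n, 0 < lam n) (hmu0 : 0 ≤ mu 0) (hmu : ∀ n, 1 ≤ n → 0 < mu n)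
    (hpi0 : pi 0 = 1) (hpi : ∀ n, pi (n + 1) = pi n * lam n / mu (n + 1))
    (K : ℕ → ℝ≥0∞) (hK : ∀ n, K n = ∑ i ∈ Finset.range (n + 1), ENNReal.ofReal (pi i))
    (Linf C D : ℝ≥0∞)
    (hLinf : Linf = ∑' i, ENNReal.ofReal (1 / (lam i * pi i)))
    (hC : C = ∑' n, ENNReal.ofReal (1 / (lam n * pi n)) * K n)
    (Q : ℕ → ℕ → ℝ → ℝ)
    (hQ0 : ∀ l x, Q l 0 x = 1)
    (hQ1 : ∀ l x, lam l * Q l 1 x = lam l + mu l - x)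
    (hQrec : ∀ l n x, lam (n + 1 + l) * Q l (n + 2) x
      = (lam (n + 1 + l) + mu (n + 1 + l) - x) * Q l (n + 1) x - mu (n + 1 + l) * Q l n x)
    (z : ℕ → ℕ → ℕ → ℝ) (xi : ℕ → ℕ → ℝ)
    (hzpos : ∀ l n i, 1 ≤ i → i ≤ n → 0 < z l n i)
    (hzlt : ∀ l n i, 1 ≤ i → i + 1 ≤ n → z l n i < z l n (i + 1))
    (hzero : ∀ l n i, 1 ≤ i → i ≤ n → Q l n (z l n i) = 0)
    (hsep1 : ∀ l n i, 1 ≤ i → i ≤ n → z l (n + 1) i < z l n i)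
    (hxi : ∀ l i, 1 ≤ i → Tendsto (fun n => z l n i) atTop (nhds (xi l i)))
    :
    (C ≠ ⊤ → D = ⊤ →
      Linf ≠ ⊤ ∧ (∀ i, 1 ≤ i → 0 < xi 0 i) ∧
        Summable (fun i : ℕ => (xi 0 (i + 1))⁻¹) ∧
        ∀ s : ℝ, s < 0 →
          Multipliable (fun i : ℕ => xi 0 (i + 1) / (xi 0 (i + 1) - s)) ∧
            Tendsto (fun n => 1 / Q 0 n s) atTop
              (nhds ((1 + mu 0 * ∑' i, (lam i * pi i)⁻¹)⁻¹ *
                ∏' i : ℕ, xi 0 (i + 1) / (xi 0 (i + 1) - s)))) ∧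
    (C = ⊤ → ∀ s : ℝ, s < 0 → Tendsto (fun n => 1 / Q 0 n s) atTop (nhds 0)) := by
  have hpi_pos : ∀ n, 0 < pi n := by
    intro n
    induction n with
    | zero => rw [hpi0]; exact one_pos
    | succ n ih => rw [hpi n]; exact div_pos (mul_pos ih (hlam n)) (hmu (n + 1) n.succ_pos)
  have hbal : ∀ n, mu (n + 1) * pi (n + 1) = lam n * pi n := fun n => by
    rw [hpi n]; field_simp [(hmu (n + 1) n.succ_pos).ne']
  have hq : BirthDeathRecurrence lam mu (Q 0) :=
    ⟨hQ0 0, hQ1 0, fun n x => by simpa using hQrec 0 n x⟩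
  have hℓ_nonneg : ∀ m, 0 ≤ (lam m * pi m)⁻¹ := fun m =>
    (inv_pos.2 (mul_pos (hlam m) (hpi_pos m))).le
  have hCsum : C ≠ ⊤ ↔ Summable fun m => (lam m * pi m)⁻¹ * ∑ j ∈ range (m + 1), pi j := by
    rw [← tsum_ofReal_ne_top_iff_summable fun m =>
      mul_nonneg (hℓ_nonneg m) (sum_nonneg fun j _ => (hpi_pos j).le), hC]
    simp_rw [hK, ← ofReal_sum_of_nonneg fun j _ => (hpi_pos j).le, one_div,
      ← ofReal_mul (hℓ_nonneg _)]
  refine ⟨fun hCfin _ => ?_, fun hCtop s hs => hq.tendsto_one_div_zero hpi0 hbal hlam hpi_pos hmu0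
    (fun h => hCsum.2 h hCtop) hs⟩
  obtain ⟨hξ, hsum, hlim⟩ := hq.tendsto_one_div_of_summable (w := fun n i => z 0 n (i + 1))
    hpi0 hbal hlam hpi_pos hmu0 (hCsum.1 hCfin) (fun n i hi => hzpos 0 n (i + 1) i.succ_pos hi)
    (fun n i hi => hzlt 0 n (i + 1) i.succ_pos hi) (fun n i hi => hzero 0 n (i + 1) i.succ_pos hi)
    (fun n i hi => (hsep1 0 n (i + 1) i.succ_pos hi).le) (fun i => hxi 0 (i + 1) i.succ_pos)
  refine ⟨?_, fun i hi => ?_, hsum, fun s hs => hlim s hs.le⟩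
  · rw [hLinf]
    simp_rw [one_div]
    exact (summable_inv_of_summable_inv_mul_sum hpi0 hlam hpi_pos
      (hCsum.1 hCfin)).tsum_ofReal_ne_top
  · obtain ⟨j, rfl⟩ := Nat.exists_eq_add_of_le' hi
    exact hξ j

theorem stmt17
    (lam mu : ℕ → ℝ) (pi : ℕ → ℝ)
    (hlam : ∀ n, 0 < lam n) (hmu0 : 0 ≤ mu 0) (hmu : ∀ n, 1 ≤ n → 0 < mu n)
    (hpi0 : pi 0 = 1) (hpi : ∀ n, pi (n + 1) = pi n * lam n / mu (n + 1))
    (K : ℕ → ℝ≥0∞) (hK : ∀ n, K n = ∑ i ∈ Finset.range (n + 1), ENNReal.ofReal (pi i))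
    (Kinf Linf C D : ℝ≥0∞)
    (hKinf : Kinf = ∑' i, ENNReal.ofReal (pi i))
    (hLinf : Linf = ∑' i, ENNReal.ofReal (1 / (lam i * pi i)))
    (hC : C = ∑' n, ENNReal.ofReal (1 / (lam n * pi n)) * K n)
    (hD : D = ∑' n, ENNReal.ofReal (1 / (lam n * pi n)) * (Kinf - K n))
    (Q : ℕ → ℕ → ℝ → ℝ)
    (hQ0 : ∀ l x, Q l 0 x = 1)
    (hQ1 : ∀ l x, lam l * Q l 1 x = lam l + mu l - x)
    (hQrec : ∀ l n x, lam (n + 1 + l) * Q l (n + 2) x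
      = (lam (n + 1 + l) + mu (n + 1 + l) - x) * Q l (n + 1) x - mu (n + 1 + l) * Q l n x)
    (z : ℕ → ℕ → ℕ → ℝ) (xi : ℕ → ℕ → ℝ)
    (hzpos : ∀ l n i, 1 ≤ i → i ≤ n → 0 < z l n i)
    (hzlt : ∀ l n i, 1 ≤ i → i + 1 ≤ n → z l n i < z l n (i + 1))
    (hzero : ∀ l n i, 1 ≤ i → i ≤ n → Q l n (z l n i) = 0)
    (hzall : ∀ l n, 1 ≤ n → ∀ y, Q l n y = 0 → ∃ i, 1 ≤ i ∧ i ≤ n ∧ y = z l n i)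
    (hsep1 : ∀ l n i, 1 ≤ i → i ≤ n → z l (n + 1) i < z l n i)
    (hsep2 : ∀ l n i, 1 ≤ i → i ≤ n → z l n i < z l (n + 1) (i + 1))
    (hxi : ∀ l i, 1 ≤ i → Tendsto (fun n => z l n i) atTop (nhds (xi l i)))
    (Lp : ℕ → ℝ) (hLp : ∀ m, Lp m = ∑ i ∈ Finset.range m, (lam i * pi i)⁻¹)
    :
    (C ≠ ⊤ → D = ⊤ →
      Linf ≠ ⊤ ∧ (∀ i, 1 ≤ i → 0 < xi 0 i) ∧
        Summable (fun i : ℕ => (xi 0 (i + 1))⁻¹) ∧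
        ∀ s : ℝ, s < 0 →
          Multipliable (fun i : ℕ => xi 0 (i + 1) / (xi 0 (i + 1) - s)) ∧
            Tendsto (fun n => 1 / Q 0 n s) atTop
              (nhds ((1 + mu 0 * ∑' i, (lam i * pi i)⁻¹)⁻¹ *
                ∏' i : ℕ, xi 0 (i + 1) / (xi 0 (i + 1) - s)))) ∧
    (C = ⊤ → ∀ s : ℝ, s < 0 → Tendsto (fun n => 1 / Q 0 n s) atTop (nhds 0)) :=
  stmt17_general lam mu pi hlam hmu0 hmu hpi0 hpi K hK Linf C D hLinf hC Q hQ0 hQ1 hQrec z xi hzpos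
    hzlt hzero hsep1 hxi
end
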